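/- arXiv:2011.05064 — 2 statements merged into one kernel-verified Lean document; each statement's English description precedes it below -/
import Mathlib

section
/- If H₀ ≡ 0 and Q₀ ≡ 0 and each subsequent pair (H_i, Q_i) is obtained from (H_{i-1}, Q_{i-1}) by a coupled Q-learning/belief-map update at some transition (s_t, a_t, s_{t+1}) with reward r_t = R(s_t, a_t), then for every iteration i and every state-action pair (s,a), ⟨H_i(s,a), R⟩ = Q_i(s,a). -/
/-!
Pairing with `R` is linear and sends the indicator at `(s, a)` to `R (s, a)`, so it carries the
belief-map update to the Q-learning update; induction on the iteration, starting from zero, does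
the rest.
-/

/-- Inner product of a belief-map entry with the reward map. -/
noncomputable def ip {S A : Type} [Fintype S] [Fintype A]
    (v R : S × A → ℝ) : ℝ := ∑ q, v q * R q

section

variable {S A : Type} [Fintype S] [Fintype A]

theorem ip_indicator [DecidableEq S] [DecidableEq A] (R : S × A → ℝ) (p : S × A) :
    ip (fun q => if q = p then (1 : ℝ) else 0) R = R p := by
  simp [ip]

theorem ip_add (u w R : S × A → ℝ) : ip (fun q => u q + w q) R = ip u R + ip w R := by
  simp only [ip, add_mul, Finset.sum_add_distrib]

theorem ip_const_mul (c : ℝ) (v R : S × A → ℝ) : ip (fun q => c * v q) R = c * ip v R := by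
  simp only [ip, mul_assoc, Finset.mul_sum]

theorem ip_belief_update [DecidableEq S] [DecidableEq A] (R : S × A → ℝ) (α γ : ℝ)
    (p : S × A) (u w : S × A → ℝ) :
    ip (fun q => (1 - α) * u q + α * ((if q = p then (1 : ℝ) else 0) + γ * w q)) R =
      (1 - α) * ip u R + α * (R p + γ * ip w R) := by
  rw [ip_add, ip_const_mul, ip_const_mul, ip_add, ip_indicator, ip_const_mul]

end

theorem consistency_all_iterations_general {S A : Type} [Fintype S] [Fintype A]
    [DecidableEq S] [DecidableEq A]
    (R : S × A → ℝ) (α γ : ℝ)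
    (Q : ℕ → S × A → ℝ) (H : ℕ → S × A → S × A → ℝ)
    (st : ℕ → S) (at_ : ℕ → A) (st' : ℕ → S) (m : ℕ → A)
    (hQ0 : Q 0 = fun _ => 0) (hH0 : H 0 = fun _ _ => 0)
    (hQ : ∀ i, Q (i + 1) = fun p => if p = (st i, at_ i) then
        (1 - α) * Q i (st i, at_ i) + α * (R (st i, at_ i) + γ * Q i (st' i, m i))
      else Q i p)
    (hH : ∀ i, H (i + 1) = fun p => if p = (st i, at_ i) then
        fun q => (1 - α) * H i (st i, at_ i) q +
          α * ((if q = (st i, at_ i) then (1 : ℝ) else 0) + γ * H i (st' i, m i) q)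
      else H i p) :
    ∀ i (p : S × A), ip (H i p) R = Q i p := by
  intro i
  induction i with
  | zero => simp [hQ0, hH0, ip]
  | succ i ih =>
    intro p
    rw [hQ i, hH i]
    dsimp only
    split_ifs
    · rw [ip_belief_update, ih, ih]
    · exact ih p

/-- With zero initialization, the coupled Q-learning / belief-map updates keep the
belief map consistent with the Q-table at every iteration. -/
theorem consistency_all_iterations {S A : Type} [Fintype S] [Fintype A]
    [DecidableEq S] [DecidableEq A]
    (R : S × A → ℝ) (α γ : ℝ)
    (Q : ℕ → S × A → ℝ) (H : ℕ → S × A → S × A → ℝ)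
    (st : ℕ → S) (at_ : ℕ → A) (st' : ℕ → S) (m : ℕ → A)
    (hQ0 : Q 0 = fun _ => 0) (hH0 : H 0 = fun _ _ => 0)
    (hm : ∀ i (a : A), Q i (st' i, a) ≤ Q i (st' i, m i))
    (hQ : ∀ i, Q (i + 1) = fun p => if p = (st i, at_ i) then
        (1 - α) * Q i (st i, at_ i) + α * (R (st i, at_ i) + γ * Q i (st' i, m i))
      else Q i p)
    (hH : ∀ i, H (i + 1) = fun p => if p = (st i, at_ i) then
        fun q => (1 - α) * H i (st i, at_ i) q +
          α * ((if q = (st i, at_ i) then (1 : ℝ) else 0) + γ * H i (st' i, m i) q)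
      else H i p) :
    ∀ i (p : S × A), ip (H i p) R = Q i p :=
  consistency_all_iterations_general R α γ Q H st at_ st' m hQ0 hH0 hQ hH
end

section
/- Suppose ⟨H_{i-1}(s,a), R⟩ = Q_{i-1}(s,a) for all (s,a). Given a finite trajectory (s_{t'}, a_{t'}), …, (s_T, a_T), if the Monte Carlo updates Q_i(s_{t'},a_{t'}) = (1−α)Q_{i-1}(s_{t'},a_{t'}) + α Σ_{t=t'}^{T} γ^t R(s_t, a_t) and H_i(s_{t'},a_{t'}) = (1−α)H_{i-1}(s_{t'},a_{t'}) + α Σ_{t=t'}^{T} γ^t 1_{(s_t,a_t)} are performed (other entries unchanged), then ⟨H_i(s,a), R⟩ = Q_i(s,a) for all (s,a). -/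
section InnerProduct

variable {S A : Type} [Fintype S] [Fintype A]

theorem ip_linear_combination (a b : ℝ) (v w R : S × A → ℝ) :
    ip (fun q => a * v q + b * w q) R = a * ip v R + b * ip w R := by
  simp only [ip, add_mul, Finset.sum_add_distrib, Finset.mul_sum, mul_assoc]

theorem ip_sum_mul_indicator [DecidableEq (S × A)] {ι : Type*} (s : Finset ι)
    (c : ι → ℝ) (τ : ι → S × A) (R : S × A → ℝ) :
    ip (fun q => ∑ t ∈ s, c t * (if q = τ t then (1 : ℝ) else 0)) R =
      ∑ t ∈ s, c t * R (τ t) := by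
  simp only [ip, Finset.sum_mul, mul_assoc, ite_mul, one_mul, zero_mul]
  rw [Finset.sum_comm]
  simp

end InnerProduct

theorem mc_consistency_step_general {S A : Type} [Fintype S] [Fintype A]
    [DecidableEq S] [DecidableEq A]
    (R Q : S × A → ℝ) (H : S × A → S × A → ℝ) (α γ : ℝ)
    (τ : ℕ → S × A) (t' T : ℕ)
    (hcons : ∀ p : S × A, ip (H p) R = Q p)
    (Q' : S × A → ℝ)
    (hQ' : Q' = fun p => if p = τ t' then
        (1 - α) * Q (τ t') + α * ∑ t ∈ Finset.Icc t' T, γ ^ t * R (τ t)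
      else Q p)
    (H' : S × A → S × A → ℝ)
    (hH' : H' = fun p => if p = τ t' then
        fun q => (1 - α) * H (τ t') q +
          α * ∑ t ∈ Finset.Icc t' T, γ ^ t * (if q = τ t then (1 : ℝ) else 0)
      else H p) :
    ∀ p : S × A, ip (H' p) R = Q' p := by
  intro p
  subst hQ' hH'
  by_cases hp : p = τ t'
  · simp only [if_pos hp]
    rw [ip_linear_combination, ip_sum_mul_indicator, hcons]
  · simp only [if_neg hp]
    exact hcons p

/-- The coupled Monte Carlo update preserves consistency of the belief map. -/
theorem mc_consistency_step {S A : Type} [Fintype S] [Fintype A]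
    [DecidableEq S] [DecidableEq A]
    (R Q : S × A → ℝ) (H : S × A → S × A → ℝ) (α γ : ℝ)
    (τ : ℕ → S × A) (t' T : ℕ) (ht : t' ≤ T)
    (hcons : ∀ p : S × A, ip (H p) R = Q p)
    (Q' : S × A → ℝ)
    (hQ' : Q' = fun p => if p = τ t' then
        (1 - α) * Q (τ t') + α * ∑ t ∈ Finset.Icc t' T, γ ^ t * R (τ t)
      else Q p)
    (H' : S × A → S × A → ℝ)
    (hH' : H' = fun p => if p = τ t' then
        fun q => (1 - α) * H (τ t') q +
          α * ∑ t ∈ Finset.Icc t' T, γ ^ t * (if q = τ t then (1 : ℝ) else 0)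
      else H p) :
    ∀ p : S × A, ip (H' p) R = Q' p :=
  mc_consistency_step_general R Q H α γ τ t' T hcons Q' hQ' H' hH'
end
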